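/- arXiv:2503.22457 — 6 statements merged into one kernel-verified Lean document; each statement's English description precedes it below -/
import Mathlib

section
/- Let 𝒢₀ = (G₀, m, φ, τ) be a Γ-gain framework with V₀ nonempty and X nonzero, and let T = (dτ(γ₁), …, dτ(γₙ)) be a generating tuple for the group dτ(Γ). If λ = (λ₁, …, λₙ) ∈ σ(T) is a joint eigenvalue for T with joint eigenvector a ∈ X, then the constant tuple (a, …, a) ∈ X^{V₀} lies in the kernel of the orbit matrix O_{𝒢₀}(conj(χ_λ)). In particular, the set of joint spectral points Ω_js(τ) is a nonempty subset of the RUM spectrum Ω(𝒢₀). -/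
/-!
Since `dτ` is a unitary representation of `Γ`, a joint eigenvector `a` of `dτ(Γ)` has eigenvalues
`χ(γ)` of modulus one, so `conj (χ (m e)) • dτ(m e) a = |χ (m e)|² • a = a` and every row of the
orbit matrix at `conj χ` vanishes on the constant tuple `(a, …, a)`. A joint eigenvector exists
because `Γ` is abelian: the operators `dτ(γ)` commute, hence span an abelian (so solvable) Lie
algebra of endomorphisms of the finite-dimensional complex space `X`, and Lie's theorem applies.
-/

/-- A character of the discrete abelian group `Γ`. -/
def IsChar {Γ : Type*} [AddCommGroup Γ] (χ : Γ → ℂ) : Prop :=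
  (∀ γ γ' : Γ, χ (γ + γ') = χ γ * χ γ') ∧ ∀ γ : Γ, ‖χ γ‖ = 1

/-- The orbit matrix `O_{𝒢₀}(χ) : X^{V₀} → Y^{E₀}` of a `Γ`-gain framework with gain
graph data `s, r, m`, linear constraints `φ` and linear parts `U γ = dτ(γ)`:
`(O_{𝒢₀}(χ) x)_e = φ_e (x_{s e}) - χ(m_e) • φ_e (dτ(m_e) x_{r e})`. -/
def orbitMatrix {Γ X Y V₀ E₀ : Type*} [AddCommGroup Γ]
    [NormedAddCommGroup X] [InnerProductSpace ℂ X]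
    [NormedAddCommGroup Y] [Module ℂ Y]
    (s r : E₀ → V₀) (m : E₀ → Γ) (φ : E₀ → (X →ₗ[ℂ] Y)) (U : Γ → (X ≃ₗᵢ[ℂ] X))
    (χ : Γ → ℂ) (x : V₀ → X) (e : E₀) : Y :=
  φ e (x (s e)) - χ (m e) • φ e (U (m e) (x (r e)))

/-- The RUM spectrum `Ω(𝒢₀)`: the set of characters whose orbit matrix has
nontrivial kernel. -/
def RUMspectrum {Γ X Y V₀ E₀ : Type*} [AddCommGroup Γ]
    [NormedAddCommGroup X] [InnerProductSpace ℂ X]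
    [NormedAddCommGroup Y] [Module ℂ Y]
    (s r : E₀ → V₀) (m : E₀ → Γ) (φ : E₀ → (X →ₗ[ℂ] Y)) (U : Γ → (X ≃ₗᵢ[ℂ] X)) :
    Set (Γ → ℂ) :=
  {χ : Γ → ℂ | IsChar χ ∧ ∃ x : V₀ → X, x ≠ 0 ∧ ∀ e, orbitMatrix s r m φ U χ x e = 0}

/-- The set of joint spectral points `Ω_js(τ)` with respect to the generating tuple `γs`. -/
def jointSpectralPoints {Γ : Type*} [AddCommGroup Γ]
    {X : Type*} [NormedAddCommGroup X] [InnerProductSpace ℂ X]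
    (U : Γ → (X ≃ₗᵢ[ℂ] X)) {n : ℕ} (γs : Fin n → Γ) : Set (Γ → ℂ) :=
  {χ : Γ → ℂ | IsChar χ ∧
    ∃ (lam : Fin n → ℂ) (a : X), a ≠ 0 ∧ (∀ j, U (γs j) a = lam j • a) ∧
      ∀ γ, U γ a = (starRingEnd ℂ) (χ γ) • a}

open ComplexConjugate

section CommonEigenvector

attribute [local instance] LieRing.ofAssociativeRing

theorem Module.End.exists_common_eigenvector_of_pairwise_commute
    {K M : Type*} [Field K] [CharZero K] [IsAlgClosed K] [AddCommGroup M] [Module K M]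
    [FiniteDimensional K M] [Nontrivial M] (S : Set (Module.End K M))
    (hS : S.Pairwise Commute) :
    ∃ a : M, a ≠ 0 ∧ ∀ f ∈ S, ∃ c : K, f a = c • a := by
  let L := LieSubalgebra.lieSpan K (Module.End K M) S
  have : IsLieAbelian L := by
    rw [LieSubalgebra.isLieAbelian_lieSpan_iff]
    intro x hx y hy
    rcases eq_or_ne x y with rfl | hxy
    · exact lie_self x
    · rw [Ring.lie_def, (hS hx hy hxy).eq, sub_self]
  obtain ⟨χ, hχ⟩ := LieModule.exists_nontrivial_weightSpace_of_isSolvable K L M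
  obtain ⟨⟨a, ha⟩, ha0⟩ := exists_ne (0 : LieModule.weightSpace M χ)
  refine ⟨a, by simpa using ha0, fun f hf => ⟨χ ⟨f, LieSubalgebra.subset_lieSpan hf⟩, ?_⟩⟩
  rw [LieModule.mem_weightSpace] at ha
  exact ha ⟨f, LieSubalgebra.subset_lieSpan hf⟩

end CommonEigenvector

theorem IsChar.conj {Γ : Type*} [AddCommGroup Γ] {χ : Γ → ℂ} (hχ : IsChar χ) :
    IsChar fun γ => conj (χ γ) :=
  ⟨fun γ γ' => by simp only [hχ.1 γ γ', map_mul], fun γ => by rw [RCLike.norm_conj, hχ.2]⟩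

section IsometricAction

variable {Γ X : Type*} [AddCommGroup Γ] [NormedAddCommGroup X] [NormedSpace ℂ X]
  {U : Γ → (X ≃ₗᵢ[ℂ] X)}

theorem linearPart_add_apply {τ : Γ → (X ≃ᵃⁱ[ℂ] X)}
    (hτ : ∀ γ γ' : Γ, ∀ x : X, τ (γ + γ') x = τ γ (τ γ' x))
    (hU : ∀ γ x, U γ x = τ γ x - τ γ 0) (γ γ' : Γ) (x : X) :
    U (γ + γ') x = U γ (U γ' x) := by
  rw [hU, hτ, hτ, hU γ' x, map_sub, hU γ (τ γ' x), hU γ (τ γ' 0)]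
  abel

theorem exists_common_eigenvector_of_add_apply [FiniteDimensional ℂ X] [Nontrivial X]
    (hmul : ∀ γ γ' x, U (γ + γ') x = U γ (U γ' x)) :
    ∃ a : X, a ≠ 0 ∧ ∀ γ, ∃ c : ℂ, U γ a = c • a := by
  have hcomm : (Set.range fun γ => ((U γ : X ≃ₗ[ℂ] X) : Module.End ℂ X)).Pairwise Commute := by
    rintro - ⟨γ, rfl⟩ - ⟨γ', rfl⟩ -
    ext x
    change U γ (U γ' x) = U γ' (U γ x)
    rw [← hmul, ← hmul, add_comm]
  obtain ⟨a, ha, hev⟩ := Module.End.exists_common_eigenvector_of_pairwise_commute _ hcomm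
  exact ⟨a, ha, fun γ => hev _ ⟨γ, rfl⟩⟩

theorem isChar_of_apply_eq_smul (hmul : ∀ γ γ' x, U (γ + γ') x = U γ (U γ' x))
    {a : X} (ha : a ≠ 0) {χ : Γ → ℂ} (hχ : ∀ γ, U γ a = χ γ • a) : IsChar χ := by
  refine ⟨fun γ γ' => smul_left_injective ℂ ha ?_, fun γ => ?_⟩
  · change χ (γ + γ') • a = (χ γ * χ γ') • a
    rw [← hχ, hmul, hχ, map_smul, hχ, smul_smul, mul_comm]
  · have : ‖χ γ‖ * ‖a‖ = 1 * ‖a‖ := by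
      rw [← norm_smul, ← hχ, LinearIsometryEquiv.norm_map, one_mul]
    exact mul_right_cancel₀ (norm_ne_zero_iff.mpr ha) this

end IsometricAction

theorem orbitMatrix_conj_const_eq_zero {Γ X Y V₀ E₀ : Type*} [AddCommGroup Γ]
    [NormedAddCommGroup X] [InnerProductSpace ℂ X] [NormedAddCommGroup Y] [Module ℂ Y]
    {U : Γ → (X ≃ₗᵢ[ℂ] X)}
    (s r : E₀ → V₀) (m : E₀ → Γ) (φ : E₀ → (X →ₗ[ℂ] Y)) {χ : Γ → ℂ}
    (hχ : ∀ γ, ‖χ γ‖ = 1) {a : X} (ha : ∀ γ, U γ a = χ γ • a) (e : E₀) :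
    orbitMatrix s r m φ U (fun γ => conj (χ γ)) (fun _ => a) e = 0 := by
  have hunit : conj (χ (m e)) * χ (m e) = 1 := by
    rw [Complex.conj_mul', hχ, Complex.ofReal_one, one_pow]
  rw [orbitMatrix, ha, map_smul, smul_smul, hunit, one_smul, sub_self]

theorem jointSpectralPoints_nonempty_subset_RUMspectrum_general
    {Γ : Type*} [AddCommGroup Γ]
    {X : Type*} [NormedAddCommGroup X] [InnerProductSpace ℂ X] [FiniteDimensional ℂ X]
    [Nontrivial X]
    {Y : Type*} [NormedAddCommGroup Y] [InnerProductSpace ℂ Y]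
    {V₀ E₀ : Type*} [Nonempty V₀]
    (s r : E₀ → V₀) (m : E₀ → Γ) (φ : E₀ → (X →ₗ[ℂ] Y))
    (τ : Γ → (X ≃ᵃⁱ[ℂ] X))
    (hτ : ∀ γ γ' : Γ, ∀ x : X, τ (γ + γ') x = τ γ (τ γ' x))
    (U : Γ → (X ≃ₗᵢ[ℂ] X)) (hU : ∀ γ x, U γ x = τ γ x - τ γ 0)
    {n : ℕ} (γs : Fin n → Γ) :
    (∀ (lam : Fin n → ℂ) (a : X) (χlam : Γ → ℂ),
        a ≠ 0 → (∀ j, U (γs j) a = lam j • a) →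
        IsChar χlam → (∀ γ, U γ a = χlam γ • a) →
        ∀ e, orbitMatrix s r m φ U (fun γ => (starRingEnd ℂ) (χlam γ))
              (fun _ : V₀ => a) e = 0) ∧
      (jointSpectralPoints U γs).Nonempty ∧
      jointSpectralPoints U γs ⊆ RUMspectrum s r m φ U := by
  have hmul := linearPart_add_apply hτ hU
  refine ⟨fun lam a χ _ _ hχ ha => orbitMatrix_conj_const_eq_zero s r m φ hχ.2 ha, ?_, ?_⟩
  · obtain ⟨a, ha, hev⟩ := exists_common_eigenvector_of_add_apply hmul
    choose χ hχ using hev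
    refine ⟨fun γ => conj (χ γ), (isChar_of_apply_eq_smul hmul ha hχ).conj,
      fun j => χ (γs j), a, ha, fun j => hχ (γs j), fun γ => ?_⟩
    rw [Complex.conj_conj, hχ]
  · rintro χ ⟨hχ, -, a, ha, -, heig⟩
    refine ⟨hχ, fun _ => a, Function.ne_iff.mpr ⟨Classical.arbitrary V₀, ha⟩, ?_⟩
    simpa only [Complex.conj_conj] using orbitMatrix_conj_const_eq_zero s r m φ hχ.conj.2 heig

/-- for a `Γ`-gain framework, if `λ ∈ σ(T)` is a joint eigenvalue of a
generating tuple `T = (dτ(γ₁), …, dτ(γₙ))` with joint eigenvector `a`, then the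
constant tuple `(a, …, a)` lies in `ker O_{𝒢₀}(conj χ_λ)`; in particular the set of
joint spectral points is a nonempty subset of the RUM spectrum. -/
theorem jointSpectralPoints_nonempty_subset_RUMspectrum
    {Γ : Type*} [AddCommGroup Γ] [AddGroup.FG Γ]
    {X : Type*} [NormedAddCommGroup X] [InnerProductSpace ℂ X] [FiniteDimensional ℂ X]
    [Nontrivial X]
    {Y : Type*} [NormedAddCommGroup Y] [InnerProductSpace ℂ Y] [FiniteDimensional ℂ Y]
    {V₀ E₀ : Type*} [Fintype V₀] [Fintype E₀] [Nonempty V₀]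
    (s r : E₀ → V₀) (m : E₀ → Γ) (φ : E₀ → (X →ₗ[ℂ] Y))
    (τ : Γ → (X ≃ᵃⁱ[ℂ] X))
    (hτ : ∀ γ γ' : Γ, ∀ x : X, τ (γ + γ') x = τ γ (τ γ' x))
    (U : Γ → (X ≃ₗᵢ[ℂ] X)) (hU : ∀ γ x, U γ x = τ γ x - τ γ 0)
    {n : ℕ} (γs : Fin n → Γ)
    (hgen : ∀ γ : Γ, U γ ∈ Subgroup.closure (Set.range fun j => U (γs j))) :
    (∀ (lam : Fin n → ℂ) (a : X) (χlam : Γ → ℂ),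
        a ≠ 0 → (∀ j, U (γs j) a = lam j • a) →
        IsChar χlam → (∀ γ, U γ a = χlam γ • a) →
        ∀ e, orbitMatrix s r m φ U (fun γ => (starRingEnd ℂ) (χlam γ))
              (fun _ : V₀ => a) e = 0) ∧
      (jointSpectralPoints U γs).Nonempty ∧
      jointSpectralPoints U γs ⊆ RUMspectrum s r m φ U :=
  jointSpectralPoints_nonempty_subset_RUMspectrum_general s r m φ τ hτ U hU γs
end

section
/- Let 𝒢₀ = (G₀, m, φ, τ) be a Γ-gain framework with V₀ nonempty and X nonzero, and let T = (dτ(γ₁), …, dτ(γₙ)) be any generating tuple for the group dτ(Γ). Then the cardinality of the RUM spectrum Ω(𝒢₀) is at least the cardinality of the joint spectrum σ(T), and for every γ ∈ Γ the cardinality of σ(T) is at least the cardinality of the spectrum σ(dτ(γ)); hence |Ω(𝒢₀)| ≥ |σ(T)| ≥ max_{γ∈Γ} |σ(dτ(γ))|. -/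
/-- The joint spectrum `σ(T)` of the tuple `T = (U (γs 1), …, U (γs n))`. -/
def jointSpectrum {Γ : Type*} {X : Type*} [NormedAddCommGroup X] [InnerProductSpace ℂ X]
    (U : Γ → (X ≃ₗᵢ[ℂ] X)) {n : ℕ} (γs : Fin n → Γ) : Set (Fin n → ℂ) :=
  {lam : Fin n → ℂ | ∃ a : X, a ≠ 0 ∧ ∀ j, U (γs j) a = lam j • a}

/-!
The `U γ` form a commuting family generated by the `U (γs j)`, so a joint eigenvector `a` of the
generators is an eigenvector of every `U γ`. Its eigenvalues form a unitary character, and for the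
conjugate character `χ` the constant configuration `x ≡ a` lies in the kernel of `O(χ)`; the joint
eigenvalue is recovered as `χ(γs j)⁻¹`. Conversely, each eigenspace of `U γ` is invariant under
the generators and so contains a joint eigenvector; since `U γ` is a word in the generators, its
eigenvalue there is determined by the joint eigenvalue.
-/

open ComplexConjugate

namespace Module.End

variable {K V : Type*} [Field K] [IsAlgClosed K] [AddCommGroup V] [Module K V]
  [FiniteDimensional K V]

theorem exists_inf_eigenspace_ne_bot (f : End K V) {W : Submodule K V}
    (hW : W ≠ ⊥) (hfW : ∀ x ∈ W, f x ∈ W) : ∃ c : K, W ⊓ f.eigenspace c ≠ ⊥ := by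
  have : Nontrivial W := Submodule.nontrivial_iff_ne_bot.2 hW
  obtain ⟨c, hc⟩ := exists_eigenvalue (f.restrict hfW)
  refine ⟨c, fun h => hc ?_⟩
  exact eigenspace_restrict_eq_bot hfW (disjoint_iff.2 (inf_comm W _ ▸ h))

theorem exists_mem_ne_zero_forall_apply_eq_smul {n : ℕ} (f : Fin n → End K V)
    (hf : ∀ i j, Commute (f i) (f j)) (W : Submodule K V) (hW : W ≠ ⊥)
    (hfW : ∀ i, ∀ x ∈ W, f i x ∈ W) :
    ∃ v ∈ W, v ≠ 0 ∧ ∃ μ : Fin n → K, ∀ i, f i v = μ i • v := by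
  induction n generalizing W with
  | zero =>
    obtain ⟨v, hvW, hv⟩ := Submodule.exists_mem_ne_zero_of_ne_bot hW
    exact ⟨v, hvW, hv, finZeroElim, finZeroElim⟩
  | succ n ih =>
    obtain ⟨c, hc⟩ := exists_inf_eigenspace_ne_bot (f 0) hW (hfW 0)
    have hfW' : ∀ i : Fin n, ∀ x ∈ W ⊓ (f 0).eigenspace c, f i.succ x ∈ W ⊓ (f 0).eigenspace c := by
      rintro i x ⟨hxW, hx⟩
      rw [SetLike.mem_coe, mem_eigenspace_iff] at hx
      refine ⟨hfW _ x hxW, mem_eigenspace_iff.2 ?_⟩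
      rw [← mul_apply, hf 0 i.succ, mul_apply, hx, map_smul]
    obtain ⟨v, ⟨hvW, hv⟩, hv0, μ, hμ⟩ :=
      ih (fun i => f i.succ) (fun i j => hf _ _) _ hc hfW'
    refine ⟨v, hvW, hv0, Fin.cons c μ, Fin.cases (mem_eigenspace_iff.1 hv) hμ⟩

end Module.End

namespace LinearIsometryEquiv

theorem exists_forall_apply_eq_smul_of_mem_closure {𝕜 E ι : Type*} [Field 𝕜]
    [SeminormedAddCommGroup E] [Module 𝕜 E] (S : ι → E ≃ₗᵢ[𝕜] E) (μ : ι → 𝕜)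
    {g : E ≃ₗᵢ[𝕜] E} (hg : g ∈ Subgroup.closure (Set.range S)) :
    ∃ c : 𝕜, ∀ v, (∀ i, S i v = μ i • v) → g v = c • v := by
  induction hg using Subgroup.closure_induction with
  | mem _ h =>
    obtain ⟨i, rfl⟩ := h
    exact ⟨μ i, fun v hv => hv i⟩
  | one => exact ⟨1, fun v _ => by simp⟩
  | mul g h _ _ hg hh =>
    obtain ⟨c, hc⟩ := hg
    obtain ⟨d, hd⟩ := hh
    refine ⟨c * d, fun v hv => ?_⟩
    rw [coe_mul, Function.comp_apply, hd v hv, map_smul, hc v hv, smul_smul, mul_comm]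
  | inv g _ hg =>
    obtain ⟨c, hc⟩ := hg
    refine ⟨c⁻¹, fun v hv => ?_⟩
    have h : v = c • g⁻¹ v := by simpa using congrArg (⇑g⁻¹) (hc v hv)
    rcases eq_or_ne c 0 with rfl | hc0
    · rw [zero_smul] at h
      simp [h]
    · exact ((inv_smul_eq_iff₀ hc0).2 h).symm

theorem norm_eq_one_of_apply_eq_smul {𝕜 E : Type*} [NormedField 𝕜] [NormedAddCommGroup E]
    [NormedSpace 𝕜 E] (g : E ≃ₗᵢ[𝕜] E) {v : E} (hv : v ≠ 0) {c : 𝕜} (hc : g v = c • v) :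
    ‖c‖ = 1 := by
  have h := g.norm_map v
  rw [hc, norm_smul] at h
  exact mul_left_eq_self₀.1 h |>.resolve_right (norm_ne_zero_iff.2 hv)

end LinearIsometryEquiv

namespace AffineIsometryEquiv

variable {𝕜 V : Type*} [NormedField 𝕜] [SeminormedAddCommGroup V] [NormedSpace 𝕜 V]

theorem linearIsometryEquiv_apply_eq_sub (f : V ≃ᵃⁱ[𝕜] V) (x : V) :
    f.linearIsometryEquiv x = f x - f 0 := by
  simpa using f.map_vsub x 0

theorem linearIsometryEquiv_add_of_apply_add {Γ : Type*} [Add Γ] (τ : Γ → V ≃ᵃⁱ[𝕜] V)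
    (hτ : ∀ γ γ' x, τ (γ + γ') x = τ γ (τ γ' x)) (γ γ' : Γ) :
    (τ (γ + γ')).linearIsometryEquiv =
      (τ γ).linearIsometryEquiv * (τ γ').linearIsometryEquiv := by
  ext x
  rw [LinearIsometryEquiv.coe_mul, Function.comp_apply, linearIsometryEquiv_apply_eq_sub (τ _),
    linearIsometryEquiv_apply_eq_sub (τ γ'), hτ, hτ]
  exact ((τ γ).map_vsub _ _).symm

end AffineIsometryEquiv

section UnitaryRepresentation

variable {Γ X : Type*} [AddCommGroup Γ] [NormedAddCommGroup X] [InnerProductSpace ℂ X]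
  {U : Γ → X ≃ₗᵢ[ℂ] X}

theorem exists_isChar_forall_smul_apply_eq (hU : ∀ γ γ', U (γ + γ') = U γ * U γ') {a : X}
    (ha : a ≠ 0) (hev : ∀ γ, ∃ c : ℂ, U γ a = c • a) :
    ∃ χ : Γ → ℂ, IsChar χ ∧ ∀ γ, χ γ • U γ a = a := by
  choose c hc using hev
  have hnorm γ : ‖c γ‖ = 1 := (U γ).norm_eq_one_of_apply_eq_smul ha (hc γ)
  have hmul γ γ' : c (γ + γ') = c γ * c γ' := smul_left_injective ℂ ha <| by
    simp only
    rw [← hc, hU, LinearIsometryEquiv.coe_mul, Function.comp_apply, hc, map_smul, hc, smul_smul,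
      mul_comm]
  refine ⟨fun γ => conj (c γ), ⟨fun γ γ' => ?_, fun γ => by simpa using hnorm γ⟩, fun γ => ?_⟩
  · simp only [hmul, map_mul]
  · rw [hc, smul_smul, Complex.conj_mul', hnorm]
    simp

theorem mem_RUMspectrum_of_forall_smul_apply_eq {Y V₀ E₀ : Type*} [NormedAddCommGroup Y]
    [Module ℂ Y] [Nonempty V₀] (s r : E₀ → V₀) (m : E₀ → Γ) (φ : E₀ → (X →ₗ[ℂ] Y))
    {χ : Γ → ℂ} (hχ : IsChar χ) {a : X} (ha : a ≠ 0) (hfix : ∀ γ, χ γ • U γ a = a) :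
    χ ∈ RUMspectrum s r m φ U := by
  refine ⟨hχ, fun _ => a, Function.ne_iff.2 ⟨Classical.arbitrary V₀, ha⟩, fun e => ?_⟩
  rw [orbitMatrix, ← map_smul, hfix, sub_self]

theorem exists_forall_apply_eq_smul_of_apply_eq_smul [FiniteDimensional ℂ X]
    (hU : ∀ γ γ', U (γ + γ') = U γ * U γ') {n : ℕ} (γs : Fin n → Γ) {γ : Γ} {c : ℂ} {a : X}
    (ha : a ≠ 0) (hca : U γ a = c • a) :
    ∃ b ≠ 0, U γ b = c • b ∧ ∃ μ : Fin n → ℂ, ∀ j, U (γs j) b = μ j • b := by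
  let T (γ : Γ) : Module.End ℂ X := (U γ).toLinearEquiv.toLinearMap
  have hT γ γ' : Commute (T γ) (T γ') := LinearMap.ext fun x =>
    DFunLike.congr_fun (show U γ * U γ' = U γ' * U γ by rw [← hU, ← hU, add_comm]) x
  have hW : (T γ).eigenspace c ≠ ⊥ :=
    (Submodule.ne_bot_iff _).2 ⟨a, Module.End.mem_eigenspace_iff.2 hca, ha⟩
  have hTW j : ∀ x ∈ (T γ).eigenspace c, T (γs j) x ∈ (T γ).eigenspace c := fun x hx =>
    Module.End.mapsTo_genEigenspace_of_comm (hT γ (γs j)) c 1 hx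
  obtain ⟨b, hbW, hb, μ, hμ⟩ :=
    Module.End.exists_mem_ne_zero_forall_apply_eq_smul (fun j => T (γs j)) (fun _ _ => hT _ _) _
      hW hTW
  exact ⟨b, hb, Module.End.mem_eigenspace_iff.1 hbW, μ, hμ⟩

end UnitaryRepresentation

theorem card_RUMspectrum_ge_general
    {Γ : Type*} [AddCommGroup Γ]
    {X : Type*} [NormedAddCommGroup X] [InnerProductSpace ℂ X] [FiniteDimensional ℂ X]
    {Y : Type*} [NormedAddCommGroup Y] [InnerProductSpace ℂ Y]
    {V₀ E₀ : Type*} [Nonempty V₀]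
    (s r : E₀ → V₀) (m : E₀ → Γ) (φ : E₀ → (X →ₗ[ℂ] Y))
    (τ : Γ → (X ≃ᵃⁱ[ℂ] X))
    (hτ : ∀ γ γ' : Γ, ∀ x : X, τ (γ + γ') x = τ γ (τ γ' x))
    (U : Γ → (X ≃ₗᵢ[ℂ] X)) (hU : ∀ γ x, U γ x = τ γ x - τ γ 0)
    {n : ℕ} (γs : Fin n → Γ)
    (hgen : ∀ γ : Γ, U γ ∈ Subgroup.closure (Set.range fun j => U (γs j))) :
    Nonempty ((jointSpectrum U γs) ↪ (RUMspectrum s r m φ U)) ∧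
      ∀ γ : Γ, Nonempty ({c : ℂ | ∃ a : X, a ≠ 0 ∧ U γ a = c • a} ↪
        (jointSpectrum U γs)) := by
  have hUτ γ : U γ = (τ γ).linearIsometryEquiv := LinearIsometryEquiv.ext fun x => by
    rw [hU, AffineIsometryEquiv.linearIsometryEquiv_apply_eq_sub]
  have hmul : ∀ γ γ', U (γ + γ') = U γ * U γ' := by
    simpa only [hUτ] using AffineIsometryEquiv.linearIsometryEquiv_add_of_apply_add τ hτ
  have hev (μ : Fin n → ℂ) (γ : Γ) :=
    LinearIsometryEquiv.exists_forall_apply_eq_smul_of_mem_closure _ μ (hgen γ)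
  constructor
  · have hchar (μ : jointSpectrum U γs) :
        ∃ χ : RUMspectrum s r m φ U, ∀ j, μ.1 j = (χ.1 (γs j))⁻¹ := by
      obtain ⟨μ, a, ha, hμ⟩ := μ
      obtain ⟨χ, hχ, hfix⟩ :=
        exists_isChar_forall_smul_apply_eq hmul ha fun γ => (hev μ γ).imp fun _ hc => hc a hμ
      refine ⟨⟨χ, mem_RUMspectrum_of_forall_smul_apply_eq s r m φ hχ ha hfix⟩, fun j => ?_⟩
      refine eq_inv_of_mul_eq_one_right (smul_left_injective ℂ ha ?_)
      simpa only [hμ, smul_smul, one_smul] using hfix (γs j)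
    choose F hF using hchar
    exact ⟨⟨F, fun μ μ' h => Subtype.ext <| funext fun j => by rw [hF μ, hF μ', h]⟩⟩
  · intro γ
    have hjoint (c : {c : ℂ | ∃ a : X, a ≠ 0 ∧ U γ a = c • a}) :
        ∃ μ : jointSpectrum U γs, ∃ b ≠ 0, U γ b = c.1 • b ∧ ∀ j, U (γs j) b = μ.1 j • b := by
      obtain ⟨c, a, ha, hca⟩ := c
      obtain ⟨b, hb, hcb, μ, hμ⟩ := exists_forall_apply_eq_smul_of_apply_eq_smul hmul γs ha hca
      exact ⟨⟨μ, b, hb, hμ⟩, b, hb, hcb, hμ⟩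
    choose F b hb hcb hμ using hjoint
    refine ⟨⟨F, fun c c' h => Subtype.ext ?_⟩⟩
    obtain ⟨d, hd⟩ := hev (F c).1 γ
    have hc : c.1 = d := smul_left_injective ℂ (hb c) ((hcb c).symm.trans (hd _ (hμ c)))
    have hc' : c'.1 = d := smul_left_injective ℂ (hb c') ((hcb c').symm.trans (hd _ (h ▸ hμ c')))
    rw [hc, hc']

/-- `|Ω(𝒢₀)| ≥ |σ(T)|` for any generating tuple `T` of `dτ(Γ)`, and
`|σ(T)| ≥ |σ(dτ(γ))|` for every `γ ∈ Γ`; hence `|Ω(𝒢₀)| ≥ |σ(T)| ≥ max_γ |σ(dτ(γ))|`. -/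
theorem card_RUMspectrum_ge
    {Γ : Type*} [AddCommGroup Γ] [AddGroup.FG Γ]
    {X : Type*} [NormedAddCommGroup X] [InnerProductSpace ℂ X] [FiniteDimensional ℂ X]
    [Nontrivial X]
    {Y : Type*} [NormedAddCommGroup Y] [InnerProductSpace ℂ Y] [FiniteDimensional ℂ Y]
    {V₀ E₀ : Type*} [Fintype V₀] [Fintype E₀] [Nonempty V₀]
    (s r : E₀ → V₀) (m : E₀ → Γ) (φ : E₀ → (X →ₗ[ℂ] Y))
    (τ : Γ → (X ≃ᵃⁱ[ℂ] X))
    (hτ : ∀ γ γ' : Γ, ∀ x : X, τ (γ + γ') x = τ γ (τ γ' x))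
    (U : Γ → (X ≃ₗᵢ[ℂ] X)) (hU : ∀ γ x, U γ x = τ γ x - τ γ 0)
    {n : ℕ} (γs : Fin n → Γ)
    (hgen : ∀ γ : Γ, U γ ∈ Subgroup.closure (Set.range fun j => U (γs j))) :
    Nonempty ((jointSpectrum U γs) ↪ (RUMspectrum s r m φ U)) ∧
      ∀ γ : Γ, Nonempty ({c : ℂ | ∃ a : X, a ≠ 0 ∧ U γ a = c • a} ↪
        (jointSpectrum U γs)) :=
  card_RUMspectrum_ge_general s r m φ τ hτ U hU γs hgen
end

section
/- Let 𝒢₀ = (G₀, m, φ, τ) be a Γ-gain framework. Then the gain framework operator C̃(𝒢₀) is an intertwiner for the representations π_{X^{V₀},τ̃} and π_{Y^{E₀}}: for every γ ∈ Γ, C̃(𝒢₀) ∘ π_{X^{V₀},τ̃}(γ) = π_{Y^{E₀}}(γ) ∘ C̃(𝒢₀) as operators from ℓ∞(Γ, X^{V₀}) to ℓ∞(Γ, Y^{E₀}). -/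
/-- The gain framework operator `C̃(𝒢₀)` of a `Γ`-gain framework, acting on functions
`f : Γ → X^{V₀}` by `(C̃(𝒢₀)f)(γ)_e = φ_e (dτ(−γ)(f(γ)_{s e} − f(γ + m_e)_{r e}))`. -/
def gainOp {Γ X Y V₀ E₀ : Type*} [AddCommGroup Γ]
    [NormedAddCommGroup X] [InnerProductSpace ℂ X]
    [NormedAddCommGroup Y] [Module ℂ Y]
    (s r : E₀ → V₀) (m : E₀ → Γ) (φ : E₀ → (X →ₗ[ℂ] Y)) (U : Γ → (X ≃ₗᵢ[ℂ] X))
    (f : Γ → V₀ → X) (γ : Γ) (e : E₀) : Y :=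
  φ e (U (-γ) (f γ (s e) - f (γ + m e) (r e)))

/-- the gain framework operator `C̃(𝒢₀)` intertwines the twisted translation
representation `π_{X^{V₀},τ̃}` on `ℓ∞(Γ, X^{V₀})` with the translation representation
`π_{Y^{E₀}}` on `ℓ∞(Γ, Y^{E₀})`:
`C̃(𝒢₀) ∘ π_{X^{V₀},τ̃}(γ) = π_{Y^{E₀}}(γ) ∘ C̃(𝒢₀)` for all `γ ∈ Γ`.
Here `(π_{X^{V₀},τ̃}(γ) f)(γ') = τ̃(γ') (τ̃(γ' − γ))⁻¹ (f (γ' − γ))`, with `τ̃(γ)` acting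
as `dτ(γ) = U γ` in every vertex coordinate, and `(π_{Y^{E₀}}(γ) g)(γ') = g (γ' − γ)`. -/
theorem gainOp_intertwines
    {Γ : Type*} [AddCommGroup Γ] [AddGroup.FG Γ]
    {X : Type*} [NormedAddCommGroup X] [InnerProductSpace ℂ X] [FiniteDimensional ℂ X]
    {Y : Type*} [NormedAddCommGroup Y] [InnerProductSpace ℂ Y] [FiniteDimensional ℂ Y]
    {V₀ E₀ : Type*} [Fintype V₀] [Fintype E₀]
    (s r : E₀ → V₀) (m : E₀ → Γ) (φ : E₀ → (X →ₗ[ℂ] Y))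
    (τ : Γ → (X ≃ᵃⁱ[ℂ] X))
    (hτ : ∀ γ γ' : Γ, ∀ x : X, τ (γ + γ') x = τ γ (τ γ' x))
    (U : Γ → (X ≃ₗᵢ[ℂ] X)) (hU : ∀ γ x, U γ x = τ γ x - τ γ 0) :
    ∀ (γ : Γ) (f : Γ → V₀ → X), (∃ M : ℝ, ∀ (γ' : Γ) (v : V₀), ‖f γ' v‖ ≤ M) →
      ∀ (γ' : Γ) (e : E₀),
        gainOp s r m φ U
          (fun ω v => U ω ((U (ω - γ)).symm (f (ω - γ) v))) γ' e =
        gainOp s r m φ U f (γ' - γ) e := by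
  have hmul : ∀ a b x, U a (U b x) = U (a + b) x := by
    intro a b x
    calc U a (U b x) = U a (τ b x - τ b 0) := by rw [hU b]
      _ = U a (τ b x) - U a (τ b 0) := map_sub _ _ _
      _ = (τ a (τ b x) - τ a 0) - (τ a (τ b 0) - τ a 0) := by rw [hU, hU]
      _ = τ (a + b) x - τ (a + b) 0 := by rw [hτ, hτ]; abel
      _ = U (a + b) x := (hU _ _).symm
  have hzero : ∀ x, U (0 : Γ) x = x := by
    intro x
    have := hmul 0 0 x
    rw [add_zero] at this
    exact (U 0).injective this
  have hsymm : ∀ a x, (U a).symm x = U (-a) x := by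
    intro a x
    apply (U a).injective
    rw [(U a).apply_symm_apply, hmul, add_neg_cancel, hzero]
  intro γ f _ γ' e
  simp only [gainOp, hsymm, map_sub, hmul]
  rw [show γ' + m e - γ = γ' - γ + m e from by abel,
    show -γ' + (γ' + -(γ' - γ)) = -(γ' - γ) from by abel,
    show -γ' + (γ' + m e + -(γ' - γ + m e)) = -(γ' - γ) from by abel]
end

section
/- Let 𝒢₀ = (G₀, m, φ, τ) be a Γ-gain framework, χ ∈ Γ̂ and a ∈ X^{V₀}. Then for every γ ∈ Γ, (C̃(𝒢₀) T_τ̃ (χ⊗a))(γ) = χ(γ)·O_{𝒢₀}(χ)a. -/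
/-- for every character `χ ∈ Γ̂` and every `a ∈ X^{V₀}`,
`(C̃(𝒢₀) T_τ̃ (χ⊗a))(γ) = χ(γ) • O_{𝒢₀}(χ) a` for all `γ ∈ Γ`.
Here `(T_τ̃ (χ⊗a))(γ)_v = dτ(γ)(χ(γ) • a_v)`. -/
theorem gainOp_on_chi_symmetric_vector
    {Γ : Type*} [AddCommGroup Γ] [AddGroup.FG Γ]
    {X : Type*} [NormedAddCommGroup X] [InnerProductSpace ℂ X] [FiniteDimensional ℂ X]
    {Y : Type*} [NormedAddCommGroup Y] [InnerProductSpace ℂ Y] [FiniteDimensional ℂ Y]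
    {V₀ E₀ : Type*} [Fintype V₀] [Fintype E₀]
    (s r : E₀ → V₀) (m : E₀ → Γ) (φ : E₀ → (X →ₗ[ℂ] Y))
    (τ : Γ → (X ≃ᵃⁱ[ℂ] X))
    (hτ : ∀ γ γ' : Γ, ∀ x : X, τ (γ + γ') x = τ γ (τ γ' x))
    (U : Γ → (X ≃ₗᵢ[ℂ] X)) (hU : ∀ γ x, U γ x = τ γ x - τ γ 0)
    (χ : Γ → ℂ) (hχ : IsChar χ) (a : V₀ → X) :
    ∀ (γ : Γ) (e : E₀),
      gainOp s r m φ U (fun γ' v => U γ' (χ γ' • a v)) γ e =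
        χ γ • orbitMatrix s r m φ U χ a e := by
  have hcomp : ∀ (b c : Γ) (x : X), U (b + c) x = U b (U c x) := by
    intro b c x
    rw [hU c x, map_sub, hU b, hU b, hU (b + c), ← hτ, ← hτ]
    abel
  have hU0 : ∀ x : X, U (0 : Γ) x = x := by
    intro x
    have h := hcomp 0 0 x
    rw [zero_add] at h
    exact ((U (0 : Γ)).injective h).symm
  have hinv : ∀ (b : Γ) (x : X), U (-b) (U b x) = x := by
    intro b x
    rw [← hcomp, neg_add_cancel, hU0]
  intro γ e
  have h1 := hχ.1 γ (m e)
  simp only [gainOp, orbitMatrix, hcomp γ (m e), map_sub, map_smul, hinv, h1,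
    smul_sub, smul_smul]
end

section
/- Let 𝒢₀ = (G₀, m, φ, τ) be a Γ-gain framework, χ ∈ Γ̂ and a ∈ X^{V₀} with a ≠ 0. Then the following are equivalent: (i) the χ-symmetric vector z(χ,a) = T_τ̃(χ⊗a) is a bounded infinitesimal flex of 𝒢₀ (i.e. C̃(𝒢₀)z(χ,a) = 0); (ii) χ ∈ Ω(𝒢₀) and a ∈ ker O_{𝒢₀}(χ). -/
/-- The `χ`-symmetric vector `z(χ, a) = T_τ̃ (χ⊗a)`,
 i.e. `z(χ,a)(γ)_v = χ(γ) dτ(γ) a_v`. -/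
def chiSymVec {Γ X V₀ : Type*} [AddCommGroup Γ]
    [NormedAddCommGroup X] [InnerProductSpace ℂ X]
    (U : Γ → (X ≃ₗᵢ[ℂ] X)) (χ : Γ → ℂ) (a : V₀ → X) : Γ → V₀ → X :=
  fun γ v => U γ (χ γ • a v)

/-- for a character `χ` and a nonzero `a ∈ X^{V₀}`, the `χ`-symmetric
vector `z(χ,a)` is a bounded infinitesimal flex of `𝒢₀` (i.e. `C̃(𝒢₀) z(χ,a) = 0`)
iff `χ ∈ Ω(𝒢₀)` and `a ∈ ker O_{𝒢₀}(χ)`. -/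
theorem chiSymVec_flex_iff
    {Γ : Type*} [AddCommGroup Γ] [AddGroup.FG Γ]
    {X : Type*} [NormedAddCommGroup X] [InnerProductSpace ℂ X] [FiniteDimensional ℂ X]
    {Y : Type*} [NormedAddCommGroup Y] [InnerProductSpace ℂ Y] [FiniteDimensional ℂ Y]
    {V₀ E₀ : Type*} [Fintype V₀] [Fintype E₀]
    (s r : E₀ → V₀) (m : E₀ → Γ) (φ : E₀ → (X →ₗ[ℂ] Y))
    (τ : Γ → (X ≃ᵃⁱ[ℂ] X))
    (hτ : ∀ γ γ' : Γ, ∀ x : X, τ (γ + γ') x = τ γ (τ γ' x))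
    (U : Γ → (X ≃ₗᵢ[ℂ] X)) (hU : ∀ γ x, U γ x = τ γ x - τ γ 0)
    (χ : Γ → ℂ) (hχ : IsChar χ) (a : V₀ → X) (ha : a ≠ 0) :
    (∀ (γ : Γ) (e : E₀), gainOp s r m φ U (chiSymVec U χ a) γ e = 0) ↔
      (χ ∈ RUMspectrum s r m φ U ∧ ∀ e, orbitMatrix s r m φ U χ a e = 0) := by
  have hadd : ∀ γ γ' : Γ, ∀ x : X, U (γ + γ') x = U γ (U γ' x) := by
    intro γ γ' x
    rw [hU (γ + γ'), hτ, hτ, hU γ' x, map_sub, hU γ (τ γ' x), hU γ (τ γ' 0)]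
    abel
  have hzero : ∀ x : X, U 0 x = x := by
    intro x
    have := hadd 0 0 x
    rw [add_zero] at this
    exact (U 0).injective this.symm
  have hinv : ∀ γ : Γ, ∀ x : X, U (-γ) (U γ x) = x := by
    intro γ x
    rw [← hadd, neg_add_cancel, hzero]
  have hχ0 : ∀ γ, χ γ ≠ 0 := fun γ h => by
    have := hχ.2 γ; rw [h, norm_zero] at this; exact one_ne_zero this.symm
  have key : ∀ (γ : Γ) (e : E₀),
      gainOp s r m φ U (chiSymVec U χ a) γ e = χ γ • orbitMatrix s r m φ U χ a e := by
    intro γ e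
    simp only [gainOp, chiSymVec, orbitMatrix]
    rw [hadd γ (m e), ← map_sub (U γ), hinv, hχ.1 γ (m e), mul_smul,
      (U (m e)).map_smul, map_sub, map_smul, map_smul, map_smul, smul_sub, smul_smul]
    rw [map_smul, smul_smul]
  constructor
  · intro h
    have horb : ∀ e, orbitMatrix s r m φ U χ a e = 0 := by
      intro e
      have := h 0 e
      rw [key] at this
      exact (smul_eq_zero.mp this).resolve_left (hχ0 0)
    exact ⟨⟨hχ, a, ha, horb⟩, horb⟩
  · intro ⟨_, horb⟩ γ e
    rw [key, horb, smul_zero]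
end

section
/- Let Γ be a countable discrete abelian group and X a finite-dimensional complex Hilbert space. For every h ∈ AP(Γ, X) and every ε > 0 there exist finitely many characters χ₁, …, χ_N ∈ Γ̂ and scalars a₁, …, a_N ∈ ℂ such that the trigonometric polynomial p(γ) = Σ_{k=1}^N a_k·χ_k(γ)·ĥ(χ_k) satisfies sup_{γ∈Γ} ‖h(γ) − p(γ)‖ < ε. In particular, h is the uniform limit of trigonometric polynomials whose Bohr–Fourier spectra are contained in Λ(h). -/
open Filter

/-- An `X`-valued trigonometric polynomial on `Γ`. -/
def IsTrigPoly {Γ X : Type*} [AddCommGroup Γ] [NormedAddCommGroup X] [Module ℂ X]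
    (p : Γ → X) : Prop :=
  ∃ (n : ℕ) (χ : Fin n → Γ → ℂ) (a : Fin n → X),
    (∀ k, IsChar (χ k)) ∧ ∀ γ, p γ = ∑ k, χ k γ • a k

/-- An almost periodic `X`-valued function on `Γ`: a uniform limit of trigonometric
polynomials. -/
def IsAP {Γ X : Type*} [AddCommGroup Γ] [NormedAddCommGroup X] [Module ℂ X]
    (h : Γ → X) : Prop :=
  ∀ ε : ℝ, 0 < ε → ∃ p : Γ → X, IsTrigPoly p ∧ ∀ γ, ‖h γ - p γ‖ < ε

/-- A Bohr–Bochner sequence for `Γ`. -/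
def IsBohrBochner {Γ : Type*} [AddCommGroup Γ] [DecidableEq Γ] (H : ℕ → Finset Γ) : Prop :=
  Monotone H ∧ (∀ γ : Γ, ∃ n, γ ∈ H n) ∧
    ∀ γ : Γ, Tendsto
      (fun n => (((H n).filter fun x => γ + x ∉ H n).card : ℝ) / ((H n).card : ℝ))
      atTop (nhds 0)


/-!
Bochner–Fejér summation. Approximate `h` within `δ` by a trigonometric polynomial
`q = ∑ⱼ ψⱼ • bⱼ` and let `K` be `|∏ⱼ ∑_{t < M} ψⱼ ^ t|²`, normalized to mean `1`. As `K` is a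
trigonometric polynomial, the mean of `γ' ↦ K γ' • h (γ + γ')` is a combination
`∑ₖ aₖ χₖ(γ) ĥ(χₖ)`; as `K ≥ 0`, it differs from `h γ` by at most the `K`-weighted mean of
`‖h γ - h (γ + ·)‖ ≤ 2δ + ∑ⱼ ‖bⱼ‖ |ψⱼ - 1|`. Writing `K = |∑_{t < M} ψⱼ ^ t|² |Qⱼ|²` gives
`K |ψⱼ - 1|² = |ψⱼ ^ M - 1|² |Qⱼ|² ≤ 4 |Qⱼ|²`, while `mean K ≥ M · mean |Qⱼ|²`, so the `K`-weighted
mean of `|ψⱼ - 1|` is small once `M` is large. All positivity comes from one fact: the mean of a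
sum of characters counts its trivial terms, hence is a nonnegative real; no independence of the
`ψⱼ` is needed.
-/

open Finset ComplexConjugate Topology

/-- Mathlib's `Finset.expect` needs a `ℚ≥0`-module structure, which complex normed spaces do not
carry as an instance; real weights serve real-, complex- and vector-valued functions alike. -/
noncomputable def avg {ι E : Type*} [AddCommGroup E] [Module ℝ E] (s : Finset ι) (f : ι → E) : E :=
  (#s : ℝ)⁻¹ • ∑ i ∈ s, f i

section Avg

variable {ι E : Type*} [NormedAddCommGroup E] [NormedSpace ℝ E] (s : Finset ι)

lemma avg_add (f g : ι → E) : avg s (fun i => f i + g i) = avg s f + avg s g := by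
  simp only [avg, sum_add_distrib, smul_add]

lemma avg_sub (f g : ι → E) : avg s (fun i => f i - g i) = avg s f - avg s g := by
  simp only [avg, sum_sub_distrib, smul_sub]

lemma avg_sum {κ : Type*} (t : Finset κ) (F : κ → ι → E) :
    avg s (fun i => ∑ k ∈ t, F k i) = ∑ k ∈ t, avg s (F k) := by
  simp only [avg, smul_sum]
  rw [sum_comm]

lemma avg_smul {R : Type*} [Monoid R] [DistribMulAction R E] [SMulCommClass ℝ R E] (c : R)
    (f : ι → E) : avg s (fun i => c • f i) = c • avg s f := by
  simp only [avg, ← smul_sum]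
  exact smul_comm _ _ _

lemma avg_smul_const {𝕜 : Type*} [NormedField 𝕜] [NormedAlgebra ℝ 𝕜] [NormedSpace 𝕜 E]
    [IsScalarTower ℝ 𝕜 E] (g : ι → 𝕜) (v : E) : avg s (fun i => g i • v) = avg s g • v := by
  simp only [avg, ← sum_smul, smul_assoc]

lemma avg_const {s : Finset ι} (hs : s.Nonempty) (c : E) : avg s (fun _ => c) = c := by
  rw [avg, sum_const, ← Nat.cast_smul_eq_nsmul ℝ,
    inv_smul_smul₀ (by exact_mod_cast hs.card_ne_zero)]

lemma norm_avg_le (f : ι → E) : ‖avg s f‖ ≤ avg s (fun i => ‖f i‖) := by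
  rw [avg, avg, norm_smul, smul_eq_mul, norm_inv, RCLike.norm_natCast]
  exact mul_le_mul_of_nonneg_left (norm_sum_le _ _) (by positivity)

lemma avg_le_avg {f g : ι → ℝ} (hfg : ∀ i, f i ≤ g i) : avg s f ≤ avg s g :=
  mul_le_mul_of_nonneg_left (sum_le_sum fun i _ => hfg i) (by positivity)

lemma norm_avg_le_of_le {f : ι → E} {C : ℝ} (hC : 0 ≤ C) (hf : ∀ i, ‖f i‖ ≤ C) :
    ‖avg s f‖ ≤ C := by
  rcases s.eq_empty_or_nonempty with rfl | hs
  · simpa [avg] using hC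
  · exact (norm_avg_le s f).trans ((avg_le_avg s hf).trans (avg_const hs C).le)

lemma ofReal_avg (f : ι → ℝ) : ((avg s f : ℝ) : ℂ) = avg s (fun i => (f i : ℂ)) := by
  simp [avg, Complex.ofReal_sum]

lemma ofReal_avg_norm_sq (P : ι → ℂ) :
    ((avg s (fun i => ‖P i‖ ^ 2) : ℝ) : ℂ) = avg s (P * star P) := by
  rw [ofReal_avg]
  congr 1
  funext i
  simp [Complex.mul_conj']

end Avg

lemma avg_eq_inv_card_smul_sum {ι E : Type*} [NormedAddCommGroup E] [NormedSpace ℂ E]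
    (s : Finset ι) (f : ι → E) : avg s f = (#s : ℂ)⁻¹ • ∑ i ∈ s, f i := by
  rw [avg, ← Complex.coe_smul, Complex.ofReal_inv, Complex.ofReal_natCast]

namespace IsChar

variable {Γ : Type*} [AddCommGroup Γ] {χ ψ : Γ → ℂ}

lemma mul_conj (hχ : IsChar χ) (γ : Γ) : χ γ * conj (χ γ) = 1 := by
  rw [Complex.mul_conj', hχ.2 γ]
  norm_num

lemma mul_star (hχ : IsChar χ) : χ * star χ = 1 :=
  funext hχ.mul_conj

lemma star (hχ : IsChar χ) : IsChar (star χ) :=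
  ⟨fun γ γ' => by simp [hχ.1 γ γ'], fun γ => by simp [hχ.2 γ]⟩

lemma mul (hχ : IsChar χ) (hψ : IsChar ψ) : IsChar (χ * ψ) :=
  ⟨fun γ γ' => by simp only [Pi.mul_apply, hχ.1, hψ.1]; ring, fun γ => by simp [hχ.2 γ, hψ.2 γ]⟩

lemma one : IsChar (1 : Γ → ℂ) :=
  ⟨fun _ _ => by simp, fun _ => by simp⟩

lemma norm_sub_comp_add (hχ : IsChar χ) (γ γ' : Γ) : ‖χ γ - χ (γ + γ')‖ = ‖χ γ' - 1‖ := by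
  rw [hχ.1, ← norm_neg, neg_sub, ← mul_sub_one, norm_mul, hχ.2, one_mul]

end IsChar

def charSubmonoid (Γ : Type*) [AddCommGroup Γ] : Submonoid (Γ → ℂ) where
  carrier := {χ | IsChar χ}
  mul_mem' := IsChar.mul
  one_mem' := IsChar.one

def charSums (Γ : Type*) [AddCommGroup Γ] : Subsemiring (Γ → ℂ) :=
  (charSubmonoid Γ).subsemiringClosure

section CharSums

variable {Γ : Type*} [AddCommGroup Γ]

lemma IsChar.mem_charSums {χ : Γ → ℂ} (hχ : IsChar χ) : χ ∈ charSums Γ :=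
  AddSubmonoid.subset_closure hχ

lemma star_mem_charSums {f : Γ → ℂ} (hf : f ∈ charSums Γ) : star f ∈ charSums Γ := by
  induction hf using AddSubmonoid.closure_induction with
  | mem χ hχ => exact IsChar.mem_charSums (IsChar.star hχ)
  | zero => simp [zero_mem]
  | add f g _ _ hf hg => simpa using add_mem hf hg

lemma IsTrigPoly.const_mul_of_mem_charSums {f : Γ → ℂ} (hf : f ∈ charSums Γ) (c : ℂ) :
    IsTrigPoly (fun γ => c * f γ) := by
  obtain ⟨l, hl, rfl⟩ := AddSubmonoid.exists_list_of_mem_closure hf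
  refine ⟨l.length, l.get, fun _ => c, fun k => hl _ (List.get_mem l k), fun γ => ?_⟩
  conv_lhs => rw [← List.ofFn_get l, List.sum_ofFn]
  simp [Finset.mul_sum, mul_comm]

end CharSums

lemma norm_sum_le_card_mul {ι E : Type*} [SeminormedAddCommGroup E] (s : Finset ι) {f : ι → E}
    {C : ℝ} (hf : ∀ i, ‖f i‖ ≤ C) : ‖∑ i ∈ s, f i‖ ≤ #s * C :=
  (norm_sum_le _ _).trans (by simpa using sum_le_card_nsmul s _ C fun i _ => hf i)

lemma norm_sum_comp_add_sub_sum_le {Γ E : Type*} [AddCommGroup Γ] [DecidableEq Γ]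
    [SeminormedAddCommGroup E] (s : Finset Γ) {f : Γ → E} {C : ℝ} (hf : ∀ γ, ‖f γ‖ ≤ C)
    (τ : Γ) : ‖∑ γ ∈ s, f (τ + γ) - ∑ γ ∈ s, f γ‖ ≤ 2 * C * #(s.filter fun x => τ + x ∉ s) := by
  set t := s.map (addLeftEmbedding τ)
  have hcard : #(t \ s) = #(s.filter fun x => τ + x ∉ s) := by
    rw [sdiff_eq_filter, filter_map, card_map]
    rfl
  have hcard' : #(s \ t) = #(t \ s) := card_sdiff_comm (card_map _).symm
  have hshift : ∑ γ ∈ s, f (τ + γ) = ∑ γ ∈ t, f γ := (sum_map s (addLeftEmbedding τ) f).symm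
  rw [hshift, ← sum_sdiff_sub_sum_sdiff]
  calc _ ≤ ‖∑ γ ∈ t \ s, f γ‖ + ‖∑ γ ∈ s \ t, f γ‖ := norm_sub_le _ _
    _ ≤ #(t \ s) * C + #(s \ t) * C :=
        add_le_add (norm_sum_le_card_mul _ hf) (norm_sum_le_card_mul _ hf)
    _ = _ := by rw [hcard', hcard]; ring

namespace IsBohrBochner

variable {Γ : Type*} [AddCommGroup Γ] [DecidableEq Γ] {H : ℕ → Finset Γ}
  {E : Type*} [NormedAddCommGroup E] [NormedSpace ℝ E]

lemma eventually_nonempty (hH : IsBohrBochner H) : ∀ᶠ n in atTop, (H n).Nonempty := by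
  obtain ⟨n₀, hn₀⟩ := hH.2.1 0
  exact eventually_atTop.2 ⟨n₀, fun n hn => ⟨0, hH.1 hn hn₀⟩⟩

lemma tendsto_avg_comp_add_sub (hH : IsBohrBochner H) {f : Γ → E} {C : ℝ}
    (hf : ∀ γ, ‖f γ‖ ≤ C) (τ : Γ) :
    Tendsto (fun n => avg (H n) (fun γ => f (τ + γ)) - avg (H n) f) atTop (𝓝 0) := by
  refine squeeze_zero_norm (fun n => ?_) (by simpa using (hH.2.2 τ).const_mul (2 * C))
  rw [avg, avg, ← smul_sub, norm_smul, norm_inv, RCLike.norm_natCast, mul_div, ← div_eq_inv_mul]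
  gcongr
  exact norm_sum_comp_add_sub_sum_le _ hf τ

lemma tendsto_avg_comp_add (hH : IsBohrBochner H) {f : Γ → E} {C : ℝ} (hf : ∀ γ, ‖f γ‖ ≤ C)
    {m : E} (hm : Tendsto (fun n => avg (H n) f) atTop (𝓝 m)) (τ : Γ) :
    Tendsto (fun n => avg (H n) (fun γ => f (τ + γ))) atTop (𝓝 m) := by
  simpa using (hH.tendsto_avg_comp_add_sub hf τ).add hm

lemma tendsto_avg_const (hH : IsBohrBochner H) (c : E) :
    Tendsto (fun n => avg (H n) (fun _ => c)) atTop (𝓝 c) :=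
  tendsto_const_nhds.congr' (hH.eventually_nonempty.mono fun _ hn => (avg_const hn c).symm)

open scoped Classical in
lemma tendsto_avg_char (hH : IsBohrBochner H) {χ : Γ → ℂ} (hχ : IsChar χ) :
    Tendsto (fun n => avg (H n) χ) atTop (𝓝 (if χ = 1 then 1 else 0)) := by
  split_ifs with hχ1
  · subst hχ1
    exact hH.tendsto_avg_const 1
  · obtain ⟨τ, hτ⟩ := Function.ne_iff.1 hχ1
    have hshift : ∀ n, avg (H n) (fun γ => χ (τ + γ)) - avg (H n) χ
        = (χ τ - 1) * avg (H n) χ := fun n => by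
      simp only [hχ.1 τ, ← smul_eq_mul (χ τ), avg_smul]
      ring
    have := ((hH.tendsto_avg_comp_add_sub (fun γ => (hχ.2 γ).le) τ).congr hshift).const_mul
      (χ τ - 1)⁻¹
    simpa using this.congr fun n => inv_mul_cancel_left₀ (sub_ne_zero.2 hτ) _

open scoped Classical in
lemma exists_tendsto_avg_of_mem_charSums (hH : IsBohrBochner H) {f : Γ → ℂ}
    (hf : f ∈ charSums Γ) : ∃ c : ℝ, 0 ≤ c ∧ Tendsto (fun n => avg (H n) f) atTop (𝓝 c) := by
  induction hf using AddSubmonoid.closure_induction with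
  | mem χ hχ =>
    refine ⟨if χ = 1 then 1 else 0, by positivity, ?_⟩
    simpa [apply_ite] using hH.tendsto_avg_char hχ
  | zero => exact ⟨0, le_rfl, by simp [avg]⟩
  | add f g _ _ hf hg =>
    obtain ⟨a, ha, hfa⟩ := hf
    obtain ⟨b, hb, hgb⟩ := hg
    refine ⟨a + b, add_nonneg ha hb, ?_⟩
    rw [Complex.ofReal_add]
    exact (hfa.add hgb).congr fun n => (avg_add _ f g).symm

lemma le_of_sub_mem_charSums (hH : IsBohrBochner H) {f g : Γ → ℂ} {a b : ℝ}
    (hf : Tendsto (fun n => avg (H n) f) atTop (𝓝 a))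
    (hg : Tendsto (fun n => avg (H n) g) atTop (𝓝 b)) (hfg : g - f ∈ charSums Γ) : a ≤ b := by
  obtain ⟨c, hc, hlim⟩ := hH.exists_tendsto_avg_of_mem_charSums hfg
  have hsub : Tendsto (fun n => avg (H n) (g - f)) atTop (𝓝 ((b - a : ℝ) : ℂ)) := by
    rw [Complex.ofReal_sub]
    exact (hg.sub hf).congr fun n => (avg_sub _ g f).symm
  have := Complex.ofReal_injective (tendsto_nhds_unique hsub hlim)
  linarith

end IsBohrBochner

lemma cauchySeq_of_forall_dist_le {E : Type*} [PseudoMetricSpace E] {u : ℕ → E}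
    (hu : ∀ ε > 0, ∃ v : ℕ → E, CauchySeq v ∧ ∀ n, dist (u n) (v n) ≤ ε) : CauchySeq u := by
  refine Metric.cauchySeq_iff'.2 fun ε hε => ?_
  obtain ⟨v, hv, huv⟩ := hu (ε / 3) (by positivity)
  obtain ⟨N, hN⟩ := Metric.cauchySeq_iff'.1 hv (ε / 3) (by positivity)
  refine ⟨N, fun n hn => ?_⟩
  calc dist (u n) (u N) ≤ dist (u n) (v n) + dist (v n) (v N) + dist (v N) (u N) :=
        dist_triangle4 _ _ _ _
    _ < ε := by linarith [huv n, hN n hn, dist_comm (v N) (u N) ▸ huv N]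

section Fourier

variable {Γ : Type*} [AddCommGroup Γ] {X : Type*} [NormedAddCommGroup X] [NormedSpace ℂ X]

def HasFourierCoeff (H : ℕ → Finset Γ) (h : Γ → X) (χ : Γ → ℂ) (c : X) : Prop :=
  Tendsto (fun n => avg (H n) (fun γ => conj (χ γ) • h γ)) atTop (𝓝 c)

lemma norm_sum_char_smul_le {n : ℕ} {ψ : Fin n → Γ → ℂ} (hψ : ∀ k, IsChar (ψ k))
    (b : Fin n → X) (γ : Γ) : ‖∑ k, ψ k γ • b k‖ ≤ ∑ k, ‖b k‖ :=
  (norm_sum_le _ _).trans (sum_le_sum fun k _ => by rw [norm_smul, (hψ k).2, one_mul])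

lemma norm_sum_char_smul_sub_comp_add_le {n : ℕ} {ψ : Fin n → Γ → ℂ} (hψ : ∀ k, IsChar (ψ k))
    (b : Fin n → X) (γ γ' : Γ) :
    ‖∑ k, ψ k γ • b k - ∑ k, ψ k (γ + γ') • b k‖ ≤ ∑ k, ‖b k‖ * ‖ψ k γ' - 1‖ := by
  rw [← sum_sub_distrib]
  refine (norm_sum_le _ _).trans (sum_le_sum fun k _ => ?_)
  rw [← sub_smul, norm_smul, (hψ k).norm_sub_comp_add, mul_comm]

lemma IsAP.exists_norm_le {h : Γ → X} (hh : IsAP h) : ∃ C, ∀ γ, ‖h γ‖ ≤ C := by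
  obtain ⟨q, ⟨n, ψ, b, hψ, hq⟩, hhq⟩ := hh 1 one_pos
  refine ⟨∑ k, ‖b k‖ + 1, fun γ => (norm_le_insert' _ (q γ)).trans ?_⟩
  exact add_le_add (hq γ ▸ norm_sum_char_smul_le hψ b γ) (hhq γ).le

lemma IsAP.char_smul {h : Γ → X} (hh : IsAP h) {χ : Γ → ℂ} (hχ : IsChar χ) :
    IsAP (fun γ => χ γ • h γ) := by
  intro ε hε
  obtain ⟨q, ⟨n, ψ, b, hψ, hq⟩, hhq⟩ := hh ε hε
  refine ⟨fun γ => χ γ • q γ, ⟨n, fun k => χ * ψ k, b, fun k => hχ.mul (hψ k), fun γ => ?_⟩,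
    fun γ => ?_⟩
  · simp [hq, smul_sum, mul_smul]
  · rw [← smul_sub, norm_smul, hχ.2, one_mul]
    exact hhq γ

namespace IsBohrBochner

variable [DecidableEq Γ] {H : ℕ → Finset Γ}

open scoped Classical in
lemma exists_tendsto_avg_of_isTrigPoly (hH : IsBohrBochner H) {p : Γ → X} (hp : IsTrigPoly p) :
    ∃ m, Tendsto (fun n => avg (H n) p) atTop (𝓝 m) := by
  obtain ⟨N, ψ, b, hψ, hp⟩ := hp
  rw [show p = fun γ => ∑ k, ψ k γ • b k from funext hp]
  simp only [avg_sum, avg_smul_const]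
  exact ⟨_, tendsto_finsetSum _ fun k _ => (hH.tendsto_avg_char (hψ k)).smul_const (b k)⟩

lemma exists_tendsto_avg_of_isAP [CompleteSpace X] (hH : IsBohrBochner H) {h : Γ → X}
    (hh : IsAP h) : ∃ m, Tendsto (fun n => avg (H n) h) atTop (𝓝 m) :=
  cauchySeq_tendsto_of_complete <| cauchySeq_of_forall_dist_le fun ε hε => by
    obtain ⟨q, hq, hhq⟩ := hh ε hε
    obtain ⟨m, hm⟩ := hH.exists_tendsto_avg_of_isTrigPoly hq
    refine ⟨_, hm.cauchySeq, fun n => ?_⟩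
    rw [dist_eq_norm, ← avg_sub]
    exact norm_avg_le_of_le _ hε.le fun γ => (hhq γ).le

lemma exists_hasFourierCoeff [CompleteSpace X] (hH : IsBohrBochner H) {h : Γ → X} (hh : IsAP h)
    {χ : Γ → ℂ} (hχ : IsChar χ) : ∃ c, HasFourierCoeff H h χ c :=
  hH.exists_tendsto_avg_of_isAP (hh.char_smul hχ.star)

lemma tendsto_avg_conj_smul_comp_add (hH : IsBohrBochner H) {h : Γ → X} {C : ℝ}
    (hC : ∀ γ, ‖h γ‖ ≤ C) {χ : Γ → ℂ} (hχ : IsChar χ) {c : X} (hc : HasFourierCoeff H h χ c)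
    (γ : Γ) :
    Tendsto (fun n => avg (H n) (fun γ' => conj (χ γ') • h (γ + γ'))) atTop (𝓝 (χ γ • c)) := by
  have hbound : ∀ γ', ‖conj (χ γ') • h γ'‖ ≤ C := fun γ' => by
    rw [norm_smul, Complex.norm_conj, hχ.2, one_mul]
    exact hC γ'
  refine ((hH.tendsto_avg_comp_add hbound hc γ).const_smul (χ γ)).congr fun n => ?_
  rw [← avg_smul]
  congr 1
  funext γ'
  rw [smul_smul, hχ.1, map_mul, ← mul_assoc, hχ.mul_conj, one_mul]

end IsBohrBochner

end Fourier

section Convolution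

variable {Γ : Type*} [AddCommGroup Γ] {X : Type*} [NormedAddCommGroup X] [NormedSpace ℂ X]

def IsFourierPolyOf (H : ℕ → Finset Γ) (h p : Γ → X) : Prop :=
  ∃ (N : ℕ) (χs : Fin N → Γ → ℂ) (as : Fin N → ℂ) (cs : Fin N → X),
    (∀ k, IsChar (χs k)) ∧ (∀ k, HasFourierCoeff H h (χs k) (cs k)) ∧
      ∀ γ, p γ = ∑ k, (as k * χs k γ) • cs k

lemma IsBohrBochner.exists_isFourierPolyOf_tendsto_avg [DecidableEq Γ] [CompleteSpace X]
    {H : ℕ → Finset Γ} (hH : IsBohrBochner H) {h : Γ → X} (hh : IsAP h) {K : Γ → ℂ}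
    (hK : IsTrigPoly K) :
    ∃ p, IsFourierPolyOf H h p ∧
      ∀ γ, Tendsto (fun n => avg (H n) (fun γ' => K γ' • h (γ + γ'))) atTop (𝓝 (p γ)) := by
  obtain ⟨C, hC⟩ := hh.exists_norm_le
  obtain ⟨N, φ, a, hφ, hK⟩ := hK
  choose c hc using fun k => hH.exists_hasFourierCoeff hh (hφ k).star
  refine ⟨_, ⟨N, fun k => star (φ k), a, c, fun k => (hφ k).star, hc, fun γ => rfl⟩, fun γ => ?_⟩
  have hsplit : ∀ n, avg (H n) (fun γ' => K γ' • h (γ + γ'))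
      = ∑ k, a k • avg (H n) (fun γ' => conj (star (φ k) γ') • h (γ + γ')) := fun n => by
    simp only [hK, sum_smul, avg_sum, ← avg_smul, smul_smul, Pi.star_apply, Complex.star_def,
      Complex.conj_conj, smul_eq_mul, mul_comm]
  simp only [hsplit, mul_smul]
  exact tendsto_finsetSum _ fun k _ =>
    (hH.tendsto_avg_conj_smul_comp_add hC (hφ k).star (hc k) γ).const_smul (a k)

end Convolution

section Fejer

variable {Γ : Type*} [AddCommGroup Γ]

/-- The squared modulus of this polynomial is `M ^ #s` times the product of the Fejér kernels
`F_M(ψ i) = |∑_{t < M} (ψ i) ^ t|² / M`. -/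
def fejerPoly {ι : Type*} (ψ : ι → Γ → ℂ) (s : Finset ι) (M : ℕ) : Γ → ℂ :=
  ∏ i ∈ s, ∑ t ∈ range M, ψ i ^ t

lemma mul_sub_one_mem_charSums {f g : Γ → ℂ} (hf : f - 1 ∈ charSums Γ)
    (hg : g - 1 ∈ charSums Γ) : f * g - 1 ∈ charSums Γ := by
  rw [show f * g - 1 = (f - 1) * (g - 1) + (f - 1) + (g - 1) by ring]
  exact add_mem (add_mem (mul_mem hf hg) hf) hg

lemma fejerPoly_mem_charSums {ι : Type*} {ψ : ι → Γ → ℂ} (hψ : ∀ i, IsChar (ψ i)) (s : Finset ι)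
    (M : ℕ) : fejerPoly ψ s M ∈ charSums Γ :=
  prod_mem fun i _ => sum_mem fun t _ => pow_mem (hψ i).mem_charSums t

lemma fejerPoly_sub_one_mem_charSums {ι : Type*} {ψ : ι → Γ → ℂ} (hψ : ∀ i, IsChar (ψ i))
    (s : Finset ι) {M : ℕ} (hM : 1 ≤ M) : fejerPoly ψ s M - 1 ∈ charSums Γ := by
  refine prod_induction _ (fun f => f - 1 ∈ charSums Γ) (fun _ _ => mul_sub_one_mem_charSums)
    (by simp [zero_mem]) fun i _ => ?_
  obtain ⟨m, rfl⟩ := Nat.exists_eq_add_of_le' hM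
  rw [sum_range_succ', pow_zero, add_sub_cancel_right]
  exact sum_mem fun t _ => pow_mem (hψ i).mem_charSums _

lemma geom_mul_mul_star_sub_mem_charSums {ψ Q : Γ → ℂ} (hψ : IsChar ψ) (hQ : Q ∈ charSums Γ)
    (M : ℕ) : (∑ t ∈ range M, ψ ^ t) * Q * star ((∑ t ∈ range M, ψ ^ t) * Q)
      - M * (Q * star Q) ∈ charSums Γ := by
  induction M with
  | zero => simp [zero_mem]
  | succ M ih =>
    set A := (∑ t ∈ range M, ψ ^ t) * Q
    have hA : A ∈ charSums Γ := mul_mem (sum_mem fun t _ => pow_mem hψ.mem_charSums t) hQ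
    have hB : ψ ^ M * Q ∈ charSums Γ := mul_mem (pow_mem hψ.mem_charSums M) hQ
    have hψM : ψ ^ M * star (ψ ^ M) = 1 := by rw [star_pow, ← mul_pow, hψ.mul_star, one_pow]
    rw [show (∑ t ∈ range (M + 1), ψ ^ t) * Q * star ((∑ t ∈ range (M + 1), ψ ^ t) * Q)
        - ↑(M + 1) * (Q * star Q) = (A * star A - M * (Q * star Q))
          + (A * star (ψ ^ M * Q) + ψ ^ M * Q * star A) by
      simp only [A, sum_range_succ, add_mul, star_add, star_mul', Nat.cast_succ]
      linear_combination (Q * star Q) * hψM]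
    exact add_mem ih
      (add_mem (mul_mem hA (star_mem_charSums hB)) (mul_mem hB (star_mem_charSums hA)))

lemma norm_geom_mul_sq_mul_norm_sub_one_sq_le {ψ : Γ → ℂ} (hψ : IsChar ψ) (M : ℕ) (z : ℂ)
    (γ : Γ) : ‖(∑ t ∈ range M, ψ γ ^ t) * z‖ ^ 2 * ‖ψ γ - 1‖ ^ 2 ≤ 4 * ‖z‖ ^ 2 := by
  have h2 : ‖ψ γ ^ M - 1‖ ≤ 2 := (norm_sub_le _ _).trans (by simp [hψ.2 γ]; norm_num)
  calc _ = (‖ψ γ ^ M - 1‖ * ‖z‖) ^ 2 := by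
        rw [← geom_sum_mul, norm_mul, norm_mul]
        ring
    _ ≤ (2 * ‖z‖) ^ 2 := by gcongr
    _ = 4 * ‖z‖ ^ 2 := by ring

lemma le_div_two_add_mul_sq {x η : ℝ} (hη : 0 < η) : x ≤ η / 2 + 2 / η * x ^ 2 := by
  rw [← sub_nonneg, show η / 2 + 2 / η * x ^ 2 - x = 2 / η * ((x - η / 4) ^ 2 + 3 * η ^ 2 / 16) by
    field_simp
    ring]
  positivity

lemma norm_fejerPoly_sq_mul_norm_sub_one_le {ι : Type*} [Fintype ι] [DecidableEq ι]
    {ψ : ι → Γ → ℂ} (hψ : ∀ i, IsChar (ψ i)) (M : ℕ) (j : ι) {η : ℝ}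
    (hη : 0 < η) (γ : Γ) :
    ‖fejerPoly ψ univ M γ‖ ^ 2 * ‖ψ j γ - 1‖
      ≤ η / 2 * ‖fejerPoly ψ univ M γ‖ ^ 2 + 8 / η * ‖fejerPoly ψ (univ.erase j) M γ‖ ^ 2 := by
  set P := fejerPoly ψ univ M
  set Q := fejerPoly ψ (univ.erase j) M
  have hP : P γ = (∑ t ∈ range M, ψ j γ ^ t) * Q γ := by
    rw [show P = (∑ t ∈ range M, ψ j ^ t) * Q from (mul_prod_erase _ _ (mem_univ j)).symm]
    simp [Finset.sum_apply]
  have h4 := norm_geom_mul_sq_mul_norm_sub_one_sq_le (hψ j) M (Q γ) γ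
  rw [← hP] at h4
  calc ‖P γ‖ ^ 2 * ‖ψ j γ - 1‖ ≤ ‖P γ‖ ^ 2 * (η / 2 + 2 / η * ‖ψ j γ - 1‖ ^ 2) := by
        gcongr
        exact le_div_two_add_mul_sq hη
    _ = η / 2 * ‖P γ‖ ^ 2 + 2 / η * (‖P γ‖ ^ 2 * ‖ψ j γ - 1‖ ^ 2) := by ring
    _ ≤ η / 2 * ‖P γ‖ ^ 2 + 2 / η * (4 * ‖Q γ‖ ^ 2) := by gcongr
    _ = η / 2 * ‖P γ‖ ^ 2 + 8 / η * ‖Q γ‖ ^ 2 := by ring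

namespace IsBohrBochner

variable [DecidableEq Γ] {H : ℕ → Finset Γ}

lemma exists_tendsto_avg_norm_sq (hH : IsBohrBochner H) {P : Γ → ℂ} (hP : P ∈ charSums Γ) :
    ∃ S, Tendsto (fun n => avg (H n) (fun γ => ‖P γ‖ ^ 2)) atTop (𝓝 S) := by
  obtain ⟨S, -, hS⟩ := hH.exists_tendsto_avg_of_mem_charSums (mul_mem hP (star_mem_charSums hP))
  refine ⟨S, tendsto_ofReal_iff.1 ?_⟩
  simpa only [ofReal_avg_norm_sq] using hS

lemma one_le_of_tendsto_avg_norm_sq (hH : IsBohrBochner H) {P : Γ → ℂ}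
    (hP : P - 1 ∈ charSums Γ) {S : ℝ}
    (hS : Tendsto (fun n => avg (H n) (fun γ => ‖P γ‖ ^ 2)) atTop (𝓝 S)) : 1 ≤ S := by
  refine hH.le_of_sub_mem_charSums (f := 1) ?_ (hS.ofReal.congr fun n => ofReal_avg_norm_sq _ P)
    (mul_sub_one_mem_charSums hP (by simpa using star_mem_charSums hP))
  exact hH.tendsto_avg_const 1

lemma mul_le_of_tendsto_avg_norm_sq (hH : IsBohrBochner H) {ψ Q : Γ → ℂ} (hψ : IsChar ψ)
    (hQ : Q ∈ charSums Γ) (M : ℕ) {S T : ℝ}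
    (hS : Tendsto (fun n => avg (H n) (fun γ => ‖((∑ t ∈ range M, ψ ^ t) * Q) γ‖ ^ 2)) atTop
      (𝓝 S))
    (hT : Tendsto (fun n => avg (H n) (fun γ => ‖Q γ‖ ^ 2)) atTop (𝓝 T)) : M * T ≤ S := by
  refine hH.le_of_sub_mem_charSums (f := M * (Q * star Q)) ?_
    (hS.ofReal.congr fun n => ofReal_avg_norm_sq _ _) (geom_mul_mul_star_sub_mem_charSums hψ hQ M)
  have := (hT.ofReal.congr fun n => ofReal_avg_norm_sq _ Q).const_mul (M : ℂ)
  push_cast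
  refine this.congr fun n => ?_
  rw [← smul_eq_mul, ← avg_smul]
  rfl

end IsBohrBochner

end Fejer

section Kernel

variable {Γ : Type*} [AddCommGroup Γ] [DecidableEq Γ] {H : ℕ → Finset Γ}
  {ι : Type*} [Fintype ι] [DecidableEq ι] {ψ : ι → Γ → ℂ}

lemma IsBohrBochner.eventually_avg_fejer_mul_norm_sub_one_le (hH : IsBohrBochner H)
    (hψ : ∀ i, IsChar (ψ i)) {M : ℕ} {S : ℝ} (hS1 : 1 ≤ S)
    (hS : Tendsto (fun n => avg (H n) (fun γ => ‖fejerPoly ψ univ M γ‖ ^ 2)) atTop (𝓝 S))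
    (j : ι) {η : ℝ} (hη : 0 < η) (hM : 16 / η ^ 2 < M) :
    ∀ᶠ n in atTop, avg (H n) (fun γ => S⁻¹ * ‖fejerPoly ψ univ M γ‖ ^ 2 * ‖ψ j γ - 1‖) ≤ η := by
  set P := fejerPoly ψ univ M
  set Q := fejerPoly ψ (univ.erase j) M
  have hPQ : P = (∑ t ∈ range M, ψ j ^ t) * Q := (mul_prod_erase _ _ (mem_univ j)).symm
  obtain ⟨T, hT⟩ := hH.exists_tendsto_avg_norm_sq (fejerPoly_mem_charSums hψ (univ.erase j) M)
  have hMT : M * T ≤ S := hH.mul_le_of_tendsto_avg_norm_sq (hψ j)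
    (fejerPoly_mem_charSums hψ _ M) M (hPQ ▸ hS) hT
  have hpt : ∀ γ, S⁻¹ * ‖P γ‖ ^ 2 * ‖ψ j γ - 1‖
      ≤ S⁻¹ * (η / 2 * ‖P γ‖ ^ 2 + 8 / η * ‖Q γ‖ ^ 2) := fun γ => by
    rw [mul_assoc]
    exact mul_le_mul_of_nonneg_left (norm_fejerPoly_sq_mul_norm_sub_one_le hψ M j hη γ)
      (by positivity)
  have hlim : Tendsto
      (fun n => avg (H n) (fun γ => S⁻¹ * (η / 2 * ‖P γ‖ ^ 2 + 8 / η * ‖Q γ‖ ^ 2))) atTop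
      (𝓝 (S⁻¹ * (η / 2 * S + 8 / η * T))) := by
    refine (((hS.const_mul _).add (hT.const_mul _)).const_mul _).congr fun n => ?_
    simp only [← smul_eq_mul, ← avg_smul, ← avg_add]
    rfl
  have hMpos : (0 : ℝ) < M := (by positivity : (0 : ℝ) < 16 / η ^ 2).trans hM
  have hlt : S⁻¹ * (η / 2 * S + 8 / η * T) < η := by
    have hTS : T ≤ S / M := by rw [le_div_iff₀ hMpos]; linarith
    have h16 : 16 < η ^ 2 * M := by rwa [div_lt_iff₀' (by positivity)] at hM
    calc S⁻¹ * (η / 2 * S + 8 / η * T) ≤ S⁻¹ * (η / 2 * S + 8 / η * (S / M)) := by gcongr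
      _ = η / 2 + 8 / (η * M) := by field_simp
      _ < η := by
          rw [← sub_pos]
          field_simp
          nlinarith
  filter_upwards [hlim.eventually (gt_mem_nhds hlt)] with n hn
  exact (avg_le_avg _ hpt).trans hn.le

theorem IsBohrBochner.exists_fejerKernel (hH : IsBohrBochner H) (hψ : ∀ i, IsChar (ψ i)) {η : ℝ}
    (hη : 0 < η) :
    ∃ K : Γ → ℝ, (∀ γ, 0 ≤ K γ) ∧ IsTrigPoly (fun γ => (K γ : ℂ)) ∧
      Tendsto (fun n => avg (H n) K) atTop (𝓝 1) ∧
      ∀ j, ∀ᶠ n in atTop, avg (H n) (fun γ => K γ * ‖ψ j γ - 1‖) ≤ η := by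
  obtain ⟨M, hM⟩ := exists_nat_gt (16 / η ^ 2)
  have hM1 : 1 ≤ M := Nat.cast_pos.1 ((by positivity : (0 : ℝ) < 16 / η ^ 2).trans hM)
  set P := fejerPoly ψ univ M
  have hP := fejerPoly_mem_charSums hψ univ M
  obtain ⟨S, hS⟩ := hH.exists_tendsto_avg_norm_sq hP
  have hS1 : 1 ≤ S := hH.one_le_of_tendsto_avg_norm_sq (fejerPoly_sub_one_mem_charSums hψ _ hM1) hS
  refine ⟨fun γ => S⁻¹ * ‖P γ‖ ^ 2, fun γ => by positivity, ?_, ?_,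
    fun j => hH.eventually_avg_fejer_mul_norm_sub_one_le hψ hS1 hS j hη hM⟩
  · convert IsTrigPoly.const_mul_of_mem_charSums (mul_mem hP (star_mem_charSums hP)) (S⁻¹ : ℂ)
      using 2 with γ
    simp [Complex.mul_conj', P]
  · have := hS.const_mul S⁻¹
    rw [inv_mul_cancel₀ (by linarith)] at this
    exact this.congr fun n => (avg_smul _ S⁻¹ _).symm

end Kernel

lemma norm_sub_le_of_tendsto_avg_smul_comp_add {Γ X : Type*} [AddCommGroup Γ]
    [NormedAddCommGroup X] [NormedSpace ℂ X] {H : ℕ → Finset Γ} {K : Γ → ℝ} (hK0 : ∀ γ, 0 ≤ K γ)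
    (hK1 : Tendsto (fun N => avg (H N) K) atTop (𝓝 1)) {n : ℕ} {ψ : Fin n → Γ → ℂ}
    (hψ : ∀ j, IsChar (ψ j)) {η : ℝ}
    (hKψ : ∀ j, ∀ᶠ N in atTop, avg (H N) (fun γ => K γ * ‖ψ j γ - 1‖) ≤ η)
    {b : Fin n → X} {f : Γ → X} {δ : ℝ} (hf : ∀ γ, ‖f γ - ∑ j, ψ j γ • b j‖ ≤ δ) {γ : Γ} {v : X}
    (hv : Tendsto (fun N => avg (H N) (fun γ' => K γ' • f (γ + γ'))) atTop (𝓝 v)) :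
    ‖f γ - v‖ ≤ 4 * δ + (∑ j, ‖b j‖) * η := by
  have hδ : 0 ≤ δ := (norm_nonneg _).trans (hf γ)
  have hmod : ∀ γ', ‖f γ - f (γ + γ')‖ ≤ 2 * δ + ∑ j, ‖b j‖ * ‖ψ j γ' - 1‖ := fun γ' => by
    have hq := norm_sum_char_smul_sub_comp_add_le hψ b γ γ'
    have hf' := hf (γ + γ')
    rw [norm_sub_rev] at hf'
    calc ‖f γ - f (γ + γ')‖
        ≤ ‖f γ - ∑ j, ψ j γ • b j‖ + ‖∑ j, ψ j γ • b j - f (γ + γ')‖ :=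
          norm_sub_le_norm_sub_add_norm_sub _ _ _
      _ ≤ ‖f γ - ∑ j, ψ j γ • b j‖ + (‖∑ j, ψ j γ • b j - ∑ j, ψ j (γ + γ') • b j‖
          + ‖∑ j, ψ j (γ + γ') • b j - f (γ + γ')‖) := by
          gcongr
          exact norm_sub_le_norm_sub_add_norm_sub _ _ _
      _ ≤ _ := by linarith [hf γ]
  have hlim : Tendsto (fun N => avg (H N) (fun γ' => K γ' • (f γ - f (γ + γ')))) atTop
      (𝓝 (f γ - v)) := by
    have := (hK1.smul_const (f γ)).sub hv
    rw [one_smul] at this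
    refine this.congr fun N => ?_
    simp only [smul_sub, avg_sub, avg_smul_const]
  refine le_of_tendsto hlim.norm ?_
  filter_upwards [hK1.eventually (ge_mem_nhds one_lt_two), eventually_all.2 hKψ] with N hN2 hNψ
  calc ‖avg (H N) (fun γ' => K γ' • (f γ - f (γ + γ')))‖
      ≤ avg (H N) (fun γ' => (2 * δ) • K γ' + ∑ j, ‖b j‖ • (K γ' * ‖ψ j γ' - 1‖)) := by
        refine (norm_avg_le _ _).trans (avg_le_avg _ fun γ' => ?_)
        rw [norm_smul, Real.norm_of_nonneg (hK0 γ')]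
        simpa [mul_add, mul_sum, mul_comm, mul_left_comm] using
          mul_le_mul_of_nonneg_left (hmod γ') (hK0 γ')
    _ = (2 * δ) * avg (H N) K + ∑ j, ‖b j‖ * avg (H N) (fun γ' => K γ' * ‖ψ j γ' - 1‖) := by
        rw [avg_add, avg_smul, avg_sum]
        simp only [avg_smul]
        rfl
    _ ≤ (2 * δ) * 2 + ∑ j, ‖b j‖ * η := by
        gcongr with j
        exact hNψ j
    _ = 4 * δ + (∑ j, ‖b j‖) * η := by rw [sum_mul]; ring

theorem bochner_fejer_approximation_general
    {Γ : Type*} [AddCommGroup Γ] [DecidableEq Γ]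
    {X : Type*} [NormedAddCommGroup X] [InnerProductSpace ℂ X] [FiniteDimensional ℂ X]
    (H : ℕ → Finset Γ) (hH : IsBohrBochner H)
    (h : Γ → X) (hAP : IsAP h) :
    ∀ ε : ℝ, 0 < ε →
      ∃ (N : ℕ) (χs : Fin N → Γ → ℂ) (as : Fin N → ℂ) (cs : Fin N → X),
        (∀ k, IsChar (χs k)) ∧
        (∀ k, Tendsto
          (fun n => (((H n).card : ℂ))⁻¹ • ∑ γ ∈ H n, (starRingEnd ℂ) (χs k γ) • h γ)
          atTop (nhds (cs k))) ∧
        ∀ γ, ‖h γ - ∑ k, (as k * χs k γ) • cs k‖ < ε := by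
  intro ε hε
  have : CompleteSpace X := FiniteDimensional.complete ℂ X
  obtain ⟨q, ⟨n, ψ, b, hψ, hq⟩, hhq⟩ := hAP (ε / 8) (by positivity)
  have hB : 0 ≤ ∑ j, ‖b j‖ := sum_nonneg fun j _ => norm_nonneg _
  obtain ⟨K, hK0, hKpoly, hK1, hKψ⟩ :=
    hH.exists_fejerKernel hψ (η := ε / (4 * (∑ j, ‖b j‖ + 1))) (by positivity)
  obtain ⟨p, ⟨N, χs, as, cs, hχs, hcs, hp⟩, hconv⟩ :=
    hH.exists_isFourierPolyOf_tendsto_avg hAP hKpoly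
  refine ⟨N, χs, as, cs, hχs,
    fun k => by simpa [HasFourierCoeff, avg_eq_inv_card_smul_sum] using hcs k, fun γ => ?_⟩
  rw [← hp]
  have hbound := norm_sub_le_of_tendsto_avg_smul_comp_add hK0 hK1 hψ hKψ
    (fun γ => hq γ ▸ (hhq γ).le) (by simpa only [Complex.coe_smul] using hconv γ)
  have hηB : (∑ j, ‖b j‖) * (ε / (4 * (∑ j, ‖b j‖ + 1))) ≤ ε / 4 := by
    rw [mul_div_assoc', div_le_div_iff₀ (by positivity) (by positivity)]
    nlinarith
  linarith

/-- Bochner–Fejér approximation: every almost periodic `h ∈ AP(Γ, X)`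
can be uniformly approximated, within any `ε > 0`, by a trigonometric polynomial of
the form `p(γ) = Σ_{k} a_k · χ_k(γ) • ĥ(χ_k)`, built from its own Fourier
coefficients `ĥ(χ_k) = lim_n |Hₙ|⁻¹ Σ_{γ∈Hₙ} conj (χ_k γ) • h γ`. -/
theorem bochner_fejer_approximation
    {Γ : Type*} [AddCommGroup Γ] [Countable Γ] [DecidableEq Γ]
    {X : Type*} [NormedAddCommGroup X] [InnerProductSpace ℂ X] [FiniteDimensional ℂ X]
    (H : ℕ → Finset Γ) (hH : IsBohrBochner H)
    (h : Γ → X) (hAP : IsAP h) :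
    ∀ ε : ℝ, 0 < ε →
      ∃ (N : ℕ) (χs : Fin N → Γ → ℂ) (as : Fin N → ℂ) (cs : Fin N → X),
        (∀ k, IsChar (χs k)) ∧
        (∀ k, Tendsto
          (fun n => (((H n).card : ℂ))⁻¹ • ∑ γ ∈ H n, (starRingEnd ℂ) (χs k γ) • h γ)
          atTop (nhds (cs k))) ∧
        ∀ γ, ‖h γ - ∑ k, (as k * χs k γ) • cs k‖ < ε :=
  bochner_fejer_approximation_general H hH h hAP
end
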